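/- arXiv:2408.10534 — 2 statements merged into one kernel-verified Lean document; each statement's English description precedes it below -/
import Mathlib

section
/- Let p be odd, and f(x) = (x^2 + pαx + pβ)(x^2 - pαx + pγ) with α, β, γ ∈ Z_p and p ∤ β, p ∤ γ. Suppose p^k exactly divides α and p^{k+1} | β - γ (Case 2). Then every monic quartic g ∈ Z_p[x] with g ≡ f (mod p^{2k+5}) is reducible in Z_p[x]. -/
/-!
Translating `X` by a quarter of the cubic coefficient turns `g` into a depressed quartic
`X⁴ + PX² + QX + R` whose coefficients are still congruent to those of `f` modulo `p^(2k+5)`.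
A depressed quartic factors as `(X² + sX + t)(X² - sX + v)` as soon as its resolvent cubic
`ψ(y) = y³ + 2Py² + (P² - 4R)y - Q²` has a root `y = s²` with `s ≠ 0` and `s ∣ Q`.
For `f` itself `y₀ = (pα)²` is such a root, and `ψ'(y₀) = 2p(β + γ)y₀ + p²(β - γ)²` has
valuation exactly `2k + 3`, while the perturbation gives `ψ(y₀) ≡ 0 mod p^(4k+7)`.
Hensel's lemma then yields a root `y ≡ y₀ mod p^(2k+4)`, which is `p^(2k+2)` times a unit
congruent to a square mod `p`, hence `y = s²` with `v(s) = k + 1 ≤ v(Q)`.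
-/

open Polynomial

section Quartic

variable {K : Type*} [CommRing K]

noncomputable def resolventCubic (P Q R : K) : K[X] :=
  X ^ 3 + C (2 * P) * X ^ 2 + C (P ^ 2 - 4 * R) * X - C (Q ^ 2)

@[simp] lemma eval_resolventCubic (P Q R y : K) :
    (resolventCubic P Q R).eval y = y ^ 3 + 2 * P * y ^ 2 + (P ^ 2 - 4 * R) * y - Q ^ 2 := by
  simp [resolventCubic]

@[simp] lemma eval_derivative_resolventCubic (P Q R y : K) :
    (resolventCubic P Q R).derivative.eval y = 3 * y ^ 2 + 4 * P * y + (P ^ 2 - 4 * R) := by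
  simp only [resolventCubic, derivative_sub, derivative_add, derivative_C_mul_X_pow,
    derivative_C_mul_X, derivative_X_pow, derivative_C, eval_sub, eval_add, eval_mul, eval_C,
    eval_pow, eval_X, eval_zero]
  ring

lemma eval_resolventCubic_sub (P Q R P' Q' R' y : K) :
    (resolventCubic P' Q' R').eval y - (resolventCubic P Q R).eval y =
      2 * y ^ 2 * (P' - P) + y * ((P' - P) * (P' + P)) - 4 * y * (R' - R) -
        (Q' - Q) * (Q' + Q) := by
  simp only [eval_resolventCubic]
  ring

lemma eval_derivative_resolventCubic_sub (P Q R P' Q' R' y : K) :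
    (resolventCubic P' Q' R').derivative.eval y - (resolventCubic P Q R).derivative.eval y =
      4 * y * (P' - P) + (P' - P) * (P' + P) - 4 * (R' - R) := by
  simp only [eval_derivative_resolventCubic]
  ring

lemma quadratic_mul_quadratic (s t v : K) :
    (X ^ 2 + C s * X + C t) * (X ^ 2 - C s * X + C v) =
      X ^ 4 + C (t + v - s ^ 2) * X ^ 2 + C (s * (v - t)) * X + C (t * v) := by
  simp only [map_add, map_sub, map_mul, map_pow]
  ring

lemma eval_resolventCubic_sq (s t v : K) :
    (resolventCubic (t + v - s ^ 2) (s * (v - t)) (t * v)).eval (s ^ 2) = 0 := by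
  simp only [eval_resolventCubic]
  ring

lemma eval_derivative_resolventCubic_sq (s t v : K) :
    (resolventCubic (t + v - s ^ 2) (s * (v - t)) (t * v)).derivative.eval (s ^ 2) =
      2 * (t + v) * s ^ 2 + (t - v) ^ 2 := by
  simp only [eval_derivative_resolventCubic]
  ring

lemma depressed_quartic_comp_X_add_C (P Q R m : K) :
    (X ^ 4 + C P * X ^ 2 + C Q * X + C R).comp (X + C m) =
      X ^ 4 + C (4 * m) * X ^ 3 + C (P + 6 * m ^ 2) * X ^ 2 +
        C (Q + 2 * P * m + 4 * m ^ 3) * X + C (R + Q * m + P * m ^ 2 + m ^ 4) := by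
  simp only [add_comp, mul_comp, pow_comp, X_comp, C_comp, map_add, map_mul, map_pow, map_ofNat]
  ring

lemma Polynomial.Monic.eq_quartic {g : K[X]} (hg : g.Monic) (hdeg : g.natDegree = 4) :
    g = X ^ 4 + C (g.coeff 3) * X ^ 3 + C (g.coeff 2) * X ^ 2 + C (g.coeff 1) * X +
      C (g.coeff 0) := by
  conv_lhs => rw [hg.as_sum, hdeg]
  simp only [Finset.sum_range_succ, Finset.sum_range_zero, pow_zero, pow_one, mul_one]
  ring

lemma exists_comp_eq_depressed_quartic (h2 : IsUnit (2 : K)) {g : K[X]} (hg : g.Monic)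
    (hdeg : g.natDegree = 4) :
    ∃ m P Q R : K, g = (X ^ 4 + C P * X ^ 2 + C Q * X + C R).comp (X + C m) ∧
      g.coeff 3 ∣ P - g.coeff 2 ∧ g.coeff 3 ∣ Q - g.coeff 1 ∧ g.coeff 3 ∣ R - g.coeff 0 := by
  have h4 : IsUnit (4 : K) := by
    convert h2.mul h2 using 1
    norm_num
  obtain ⟨m, hm⟩ := h4.dvd (a := g.coeff 3)
  set P := g.coeff 2 - 6 * m ^ 2 with hP
  set Q := g.coeff 1 - 2 * P * m - 4 * m ^ 3 with hQ
  set R := g.coeff 0 - Q * m - P * m ^ 2 - m ^ 4 with hR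
  refine ⟨m, P, Q, R, ?_, ?_, ?_, ?_⟩
  · rw [depressed_quartic_comp_X_add_C, ← hm, hR, hQ, hP]
    conv_lhs => rw [hg.eq_quartic hdeg]
    ring_nf
  all_goals rw [hm, h4.mul_left_dvd]
  · exact ⟨-6 * m, by ring⟩
  · exact ⟨-2 * P - 4 * m ^ 2, by ring⟩
  · exact ⟨-Q - P * m - m ^ 3, by ring⟩

lemma depressed_quartic_eq_mul_of_eval_resolventCubic_sq [IsDomain K] (h2 : IsUnit (2 : K))
    {P Q R s q : K} (hs : s ≠ 0) (hq : Q = s * q)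
    (hroot : (resolventCubic P Q R).eval (s ^ 2) = 0) :
    ∃ t v : K, X ^ 4 + C P * X ^ 2 + C Q * X + C R =
      (X ^ 2 + C s * X + C t) * (X ^ 2 - C s * X + C v) := by
  obtain ⟨i, hi⟩ := h2.exists_right_inv
  refine ⟨(P + s ^ 2 - q) * i, (P + s ^ 2 + q) * i, ?_⟩
  -- `s² · 4(tv - R)` is the resolvent cubic at `s²`
  have htv : (P + s ^ 2 - q) * i * ((P + s ^ 2 + q) * i) = R := by
    have h4 : (4 : K) ≠ 0 := by
      rw [show (4 : K) = 2 * 2 by norm_num]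
      exact (h2.mul h2).ne_zero
    refine mul_left_cancel₀ (mul_ne_zero (pow_ne_zero 2 hs) h4) ?_
    rw [eval_resolventCubic, hq] at hroot
    linear_combination (s ^ 2 * ((P + s ^ 2) ^ 2 - q ^ 2) * (2 * i + 1)) * hi + hroot
  rw [quadratic_mul_quadratic, htv, hq]
  have hsum : (P + s ^ 2 - q) * i + (P + s ^ 2 + q) * i - s ^ 2 = P := by
    linear_combination (P + s ^ 2) * hi
  have hdiff : s * ((P + s ^ 2 + q) * i - (P + s ^ 2 - q) * i) = s * q := by
    linear_combination s * q * hi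
  rw [hsum, hdiff]

lemma not_irreducible_of_eq_comp_quadratic_mul_quadratic [IsDomain K] {g : K[X]} {s t v m : K}
    (h : g = ((X ^ 2 + C s * X + C t) * (X ^ 2 - C s * X + C v)).comp (X + C m)) :
    ¬ Irreducible g := by
  have hdeg {F : K[X]} (hF : F.natDegree = 2) : (F.comp (X + C m)).natDegree ≠ 0 := by
    rw [natDegree_comp, natDegree_X_add_C, hF]
    norm_num
  rw [mul_comp] at h
  exact fun hg => (hg.isUnit_or_isUnit h).elim
    (hdeg (by compute_degree!) <| natDegree_eq_zero_of_isUnit ·)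
    (hdeg (by compute_degree!) <| natDegree_eq_zero_of_isUnit ·)

end Quartic

namespace PadicInt

variable {p : ℕ} [Fact p.Prime]

lemma norm_le_pow_iff_dvd (x : ℤ_[p]) (n : ℕ) :
    ‖x‖ ≤ (p : ℝ) ^ (-n : ℤ) ↔ (p : ℤ_[p]) ^ n ∣ x := by
  rw [norm_le_pow_iff_mem_span_pow, Ideal.mem_span_singleton]

lemma isUnit_iff_not_dvd {x : ℤ_[p]} : IsUnit x ↔ ¬ (p : ℤ_[p]) ∣ x := by
  rw [isUnit_iff, ← norm_lt_one_iff_dvd, not_lt]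
  exact ⟨ge_of_eq, (norm_le_one x).antisymm⟩

lemma not_dvd_two (hp : p ≠ 2) : ¬ (p : ℤ_[p]) ∣ 2 := by
  rw [← norm_lt_one_iff_dvd, show (2 : ℤ_[p]) = ((2 : ℤ) : ℤ_[p]) by norm_num,
    norm_int_lt_one_iff_dvd]
  exact_mod_cast fun h => hp ((Nat.prime_dvd_prime_iff_eq Fact.out Nat.prime_two).mp h)

lemma pow_dvd_coeff_sub_of_map_toZModPow_eq {n : ℕ} {f g : ℤ_[p][X]}
    (h : g.map (toZModPow n) = f.map (toZModPow n)) (i : ℕ) :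
    (p : ℤ_[p]) ^ n ∣ g.coeff i - f.coeff i := by
  rw [← Ideal.mem_span_singleton, ← ker_toZModPow, RingHom.mem_ker, map_sub, ← coeff_map,
    ← coeff_map, h, sub_self]

lemma exists_eval_eq_zero_of_dvd (F : ℤ_[p][X]) {a u : ℤ_[p]} {n : ℕ}
    (hu : ¬ (p : ℤ_[p]) ∣ u) (hF' : F.derivative.eval a = p ^ n * u)
    (hF : (p : ℤ_[p]) ^ (2 * n + 1) ∣ F.eval a) :
    ∃ z, F.eval z = 0 ∧ (p : ℤ_[p]) ^ (n + 1) ∣ z - a := by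
  have hp : (1 : ℝ) < p := by exact_mod_cast (Fact.out : p.Prime).one_lt
  have hF'norm : ‖F.derivative.eval a‖ = (p : ℝ) ^ (-n : ℤ) := by
    rw [hF', norm_mul, norm_p_pow, isUnit_iff.mp (isUnit_iff_not_dvd.mpr hu), mul_one]
  have hnorm : ‖F.aeval a‖ < ‖F.derivative.aeval a‖ ^ 2 := by
    rw [coe_aeval_eq_eval, hF'norm, ← zpow_natCast, ← zpow_mul]
    refine ((norm_le_pow_iff_dvd _ _).mpr hF).trans_lt (zpow_lt_zpow_right₀ hp ?_)
    push_cast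
    omega
  obtain ⟨z, hz, hza, -⟩ := hensels_lemma hnorm
  refine ⟨z, by rwa [coe_aeval_eq_eval] at hz, (norm_le_pow_iff_dvd _ _).mp ?_⟩
  rw [coe_aeval_eq_eval, hF'norm, norm_lt_pow_iff_norm_le_pow_sub_one] at hza
  convert hza using 2
  push_cast
  ring

lemma exists_sq_eq_of_dvd_sub_sq (hp : p ≠ 2) {a y : ℤ_[p]} (ha : ¬ (p : ℤ_[p]) ∣ a)
    (hy : (p : ℤ_[p]) ∣ y - a ^ 2) : ∃ s, s ^ 2 = y := by
  have h2a : ¬ (p : ℤ_[p]) ∣ 2 * a := fun h => (prime_p.dvd_mul.mp h).elim (not_dvd_two hp) ha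
  obtain ⟨s, hs, -⟩ := exists_eval_eq_zero_of_dvd (X ^ 2 - C y) (a := a) (n := 0) h2a
    (by simp; norm_num) (by simpa using hy.neg_right)
  exact ⟨s, by simpa [sub_eq_zero] using hs⟩

end PadicInt

lemma pow_dvd_mul_of_le {M : Type*} [CommMonoid M] {π x y : M} {a b c : ℕ}
    (hx : π ^ a ∣ x) (hy : π ^ b ∣ y) (h : c ≤ a + b) : π ^ c ∣ x * y :=
  (pow_dvd_pow π h).trans (pow_add π a b ▸ mul_dvd_mul hx hy)

section QuarticNearSplit

open PadicInt

variable {p : ℕ} [Fact p.Prime] {k : ℕ} {a α β γ δ P Q R : ℤ_[p]}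

local notation "π" => (p : ℤ_[p])

lemma pow_dvd_mul_mul_sub (hα : α = π ^ k * a) (hδ : β - γ = π ^ (k + 1) * δ) :
    π ^ (2 * k + 3) ∣ π * α * (π * γ - π * β) :=
  ⟨-(a * δ), by rw [hα]; linear_combination (-π ^ (k + 2) * a) * hδ⟩

lemma exists_eval_resolventCubic_eq_zero_of_dvd_sub (hp : p ≠ 2) (hα : α = π ^ k * a)
    (ha : ¬ π ∣ a) (hβγ : ¬ π ∣ β + γ) (hδ : β - γ = π ^ (k + 1) * δ)
    (hP : π ^ (2 * k + 5) ∣ P - (π * β + π * γ - (π * α) ^ 2))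
    (hQ : π ^ (2 * k + 5) ∣ Q - π * α * (π * γ - π * β))
    (hR : π ^ (2 * k + 5) ∣ R - π * β * (π * γ)) :
    ∃ y, (resolventCubic P Q R).eval y = 0 ∧ π ^ (2 * k + 4) ∣ y - (π * α) ^ 2 := by
  have hy₀ : π ^ (2 * k + 2) ∣ (π * α) ^ 2 := ⟨a ^ 2, by rw [hα]; ring⟩
  have hQ₀ := pow_dvd_mul_mul_sub hα hδ
  have hQQ₀ : π ^ (2 * k + 3) ∣ Q + π * α * (π * γ - π * β) := by
    rw [← sub_add_cancel Q (π * α * (π * γ - π * β)), add_assoc]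
    exact ((pow_dvd_pow π (by omega)).trans hQ).add (hQ₀.add hQ₀)
  have hval : π ^ (2 * (2 * k + 3) + 1) ∣ (resolventCubic P Q R).eval ((π * α) ^ 2) := by
    rw [← sub_zero ((resolventCubic P Q R).eval _), ← eval_resolventCubic_sq (π * α) (π * β),
      eval_resolventCubic_sub]
    have hy₀sq : π ^ (4 * k + 4) ∣ 2 * ((π * α) ^ 2) ^ 2 :=
      Dvd.dvd.mul_left (sq ((π * α) ^ 2) ▸ pow_dvd_mul_of_le hy₀ hy₀ (by omega)) 2
    exact (((pow_dvd_mul_of_le hy₀sq hP (by omega)).add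
      (pow_dvd_mul_of_le hy₀ (hP.mul_right _) (by omega))).sub
      (pow_dvd_mul_of_le (hy₀.mul_left 4) hR (by omega))).sub
      (pow_dvd_mul_of_le hQ hQQ₀ (by omega))
  obtain ⟨w, hw⟩ : π ^ (2 * k + 5) ∣ (resolventCubic P Q R).derivative.eval ((π * α) ^ 2) -
      (resolventCubic (π * β + π * γ - (π * α) ^ 2) (π * α * (π * γ - π * β))
        (π * β * (π * γ))).derivative.eval ((π * α) ^ 2) := by
    rw [eval_derivative_resolventCubic_sub]
    exact ((hP.mul_left _).add (hP.mul_right _)).sub (hR.mul_left 4)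
  rw [eval_derivative_resolventCubic_sq] at hw
  -- the derivative has valuation exactly `2k + 3`, coming from the term `2π(β + γ)(πα)²`
  have hderiv : (resolventCubic P Q R).derivative.eval ((π * α) ^ 2) =
      π ^ (2 * k + 3) * (2 * (β + γ) * a ^ 2 + π * (δ ^ 2 + π * w)) := by
    rw [hα] at hw ⊢
    linear_combination hw + (π ^ 2 * (β - γ + π ^ (k + 1) * δ)) * hδ
  have hunit : ¬ π ∣ 2 * (β + γ) * a ^ 2 := isUnit_iff_not_dvd.mp <|
    ((isUnit_iff_not_dvd.mpr (not_dvd_two hp)).mul (isUnit_iff_not_dvd.mpr hβγ)).mul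
      ((isUnit_iff_not_dvd.mpr ha).pow 2)
  exact exists_eval_eq_zero_of_dvd _ (mt (dvd_add_left (dvd_mul_right π _)).mp hunit) hderiv hval

lemma exists_depressed_quartic_eq_mul_of_dvd_sub (hp : p ≠ 2) (hα : α = π ^ k * a)
    (ha : ¬ π ∣ a) (hβγ : ¬ π ∣ β + γ) (hδ : β - γ = π ^ (k + 1) * δ)
    (hP : π ^ (2 * k + 5) ∣ P - (π * β + π * γ - (π * α) ^ 2))
    (hQ : π ^ (2 * k + 5) ∣ Q - π * α * (π * γ - π * β))
    (hR : π ^ (2 * k + 5) ∣ R - π * β * (π * γ)) :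
    ∃ s t v, X ^ 4 + C P * X ^ 2 + C Q * X + C R =
      (X ^ 2 + C s * X + C t) * (X ^ 2 - C s * X + C v) := by
  obtain ⟨y, hy, d, hd⟩ := exists_eval_resolventCubic_eq_zero_of_dvd_sub hp hα ha hβγ hδ hP hQ hR
  obtain ⟨s₁, hs₁⟩ := exists_sq_eq_of_dvd_sub_sq hp ha (y := a ^ 2 + π ^ 2 * d) ⟨π * d, by ring⟩
  have hs₁u : IsUnit s₁ := isUnit_iff_not_dvd.mpr fun h => ha <| prime_p.dvd_of_dvd_pow <|
    (dvd_add_left ((dvd_pow_self π two_ne_zero).mul_right d)).mp (hs₁ ▸ dvd_pow h two_ne_zero)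
  have hsy : (π ^ (k + 1) * s₁) ^ 2 = y := by
    rw [hα] at hd
    linear_combination π ^ (2 * k + 2) * hs₁ - hd
  obtain ⟨w, hw⟩ : π ^ (2 * k + 3) ∣ Q := by
    rw [← sub_add_cancel Q (π * α * (π * γ - π * β))]
    exact ((pow_dvd_pow π (by omega)).trans hQ).add (pow_dvd_mul_mul_sub hα hδ)
  obtain ⟨q, hq⟩ : π ^ (k + 1) * s₁ ∣ Q := hw ▸ mul_dvd_mul (pow_dvd_pow π (by omega)) hs₁u.dvd
  obtain ⟨t, v, h⟩ := depressed_quartic_eq_mul_of_eval_resolventCubic_sq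
    (isUnit_iff_not_dvd.mpr (not_dvd_two hp))
    (mul_ne_zero (pow_ne_zero _ prime_p.ne_zero) hs₁u.ne_zero) hq (by rwa [hsy])
  exact ⟨_, t, v, h⟩

end QuarticNearSplit

open PadicInt in
theorem stmt_16_general (p : ℕ) [Fact p.Prime] (hodd : p ≠ 2) (α β γ : ℤ_[p]) (k : ℕ)
    (hβ : ¬ (p : ℤ_[p]) ∣ β)
    (hα : (p : ℤ_[p]) ^ k ∣ α) (hα' : ¬ (p : ℤ_[p]) ^ (k + 1) ∣ α)
    (hdiff : (p : ℤ_[p]) ^ (k + 1) ∣ (β - γ)) :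
    ∀ g : Polynomial ℤ_[p], g.Monic → g.natDegree = 4 →
      g.map (PadicInt.toZModPow (2 * k + 5)) =
        ((X ^ 2 + C ((p : ℤ_[p]) * α) * X + C ((p : ℤ_[p]) * β)) *
          (X ^ 2 - C ((p : ℤ_[p]) * α) * X + C ((p : ℤ_[p]) * γ))).map
            (PadicInt.toZModPow (2 * k + 5)) →
      ¬ Irreducible g := by
  intro g hg hdeg hmap
  obtain ⟨a, hαa⟩ := hα
  have ha : ¬ (p : ℤ_[p]) ∣ a := fun ⟨c, hc⟩ => hα' ⟨c, by rw [hαa, hc]; ring⟩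
  obtain ⟨δ, hδ⟩ := hdiff
  have hβγ : ¬ (p : ℤ_[p]) ∣ β + γ := fun h => hβ <| by
    have h2β : (p : ℤ_[p]) ∣ 2 * β := by
      rw [show 2 * β = β + γ + (β - γ) by ring, hδ]
      exact h.add (dvd_mul_of_dvd_left (dvd_pow_self _ k.succ_ne_zero) δ)
    exact (prime_p.dvd_mul.mp h2β).resolve_left (not_dvd_two hodd)
  rw [quadratic_mul_quadratic] at hmap
  have hcoeff := pow_dvd_coeff_sub_of_map_toZModPow_eq hmap
  have h3 := hcoeff 3
  have h2 := hcoeff 2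
  have h1 := hcoeff 1
  have h0 := hcoeff 0
  simp only [coeff_add, coeff_X_pow, coeff_C_mul_X_pow, coeff_C_mul_X, coeff_C, Nat.reduceEqDiff,
    ite_true, ite_false, add_zero, zero_add, sub_zero] at h3 h2 h1 h0
  obtain ⟨m, P, Q, R, hgD, hP, hQ, hR⟩ :=
    exists_comp_eq_depressed_quartic (isUnit_iff_not_dvd.mpr (not_dvd_two hodd)) hg hdeg
  obtain ⟨s, t, v, hD⟩ := exists_depressed_quartic_eq_mul_of_dvd_sub hodd hαa ha hβγ hδ
    (sub_add_sub_cancel P (g.coeff 2) _ ▸ (h3.trans hP).add h2)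
    (sub_add_sub_cancel Q (g.coeff 1) _ ▸ (h3.trans hQ).add h1)
    (sub_add_sub_cancel R (g.coeff 0) _ ▸ (h3.trans hR).add h0)
  exact not_irreducible_of_eq_comp_quadratic_mul_quadratic (hD ▸ hgD)

/-- Claim 3, Case 2: with `f = (x² + pαx + pβ)(x² - pαx + pγ)`, `p ∤ β`, `p ∤ γ`,
`p^k` exactly dividing `α` and `p^(k+1) ∣ β - γ`, every monic quartic
`g ≡ f (mod p^(2k+5))` is reducible in `ℤ_p[x]`. -/
theorem stmt_16 (p : ℕ) [Fact p.Prime] (hodd : p ≠ 2) (α β γ : ℤ_[p]) (k : ℕ)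
    (hβ : ¬ (p : ℤ_[p]) ∣ β) (hγ : ¬ (p : ℤ_[p]) ∣ γ)
    (hα : (p : ℤ_[p]) ^ k ∣ α) (hα' : ¬ (p : ℤ_[p]) ^ (k + 1) ∣ α)
    (hdiff : (p : ℤ_[p]) ^ (k + 1) ∣ (β - γ)) :
    ∀ g : Polynomial ℤ_[p], g.Monic → g.natDegree = 4 →
      g.map (PadicInt.toZModPow (2 * k + 5)) =
        ((X ^ 2 + C ((p : ℤ_[p]) * α) * X + C ((p : ℤ_[p]) * β)) *
          (X ^ 2 - C ((p : ℤ_[p]) * α) * X + C ((p : ℤ_[p]) * γ))).map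
            (PadicInt.toZModPow (2 * k + 5)) →
      ¬ Irreducible g :=
  stmt_16_general p hodd α β γ k hβ hα hα' hdiff
end

section
/- Let p be odd and A, B, C, A', B', C' ∈ Z_p with p^k | B, C, B', C', p^{k+1} ∤ C, p^{k+1} ∤ C', and p ∤ A^2 - C^2, p ∤ A'^2 - C'^2. If (x^2 + pA)^2 - p^2(Bx + C)^2 ≡ (x^2 + pA')^2 - p^2(B'x + C')^2 (mod p^{2k+4}), then A ≡ A' (mod p^{2k+3}). -/
open Polynomial

lemma aux_expand {R : Type*} [CommRing R] (q a b c : R) :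
    (X ^ 2 + C (q * a)) ^ 2 - C (q ^ 2) * (C b * X + C c) ^ 2 =
    X ^ 4 + C (2 * (q * a) - q ^ 2 * b ^ 2) * X ^ 2 +
      C (-(q ^ 2 * (2 * b * c))) * X + C ((q * a) ^ 2 - q ^ 2 * c ^ 2) := by
  simp only [map_mul, map_add, map_sub, map_neg, map_pow, map_ofNat]
  ring

lemma aux_coeff2 {R : Type*} [CommRing R] (u v w : R) :
    (X ^ 4 + C u * X ^ 2 + C v * X + C w).coeff 2 = u := by
  simp [coeff_X_pow]

lemma aux_coeff1 {R : Type*} [CommRing R] (u v w : R) :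
    (X ^ 4 + C u * X ^ 2 + C v * X + C w).coeff 1 = v := by
  simp [coeff_X_pow]

lemma aux_coeff0 {R : Type*} [CommRing R] (u v w : R) :
    (X ^ 4 + C u * X ^ 2 + C v * X + C w).coeff 0 = w := by
  simp [coeff_X_pow]

lemma aux_map {R S : Type*} [CommRing R] [CommRing S] (f : R →+* S) (u v w : R) :
    (X ^ 4 + C u * X ^ 2 + C v * X + C w).map f =
    X ^ 4 + C (f u) * X ^ 2 + C (f v) * X + C (f w) := by
  simp

/-- Claim 4: for odd `p`, with `p^k ∣ B, C, B', C'`, `p^(k+1) ∤ C`, `p^(k+1) ∤ C'`,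
`p ∤ A² - C²`, `p ∤ A'² - C'²`, if
`(x² + pA)² - p²(Bx + C)² ≡ (x² + pA')² - p²(B'x + C')² (mod p^(2k+4))`
coefficientwise, then `A ≡ A' (mod p^(2k+3))`. -/
theorem stmt_17 (p : ℕ) [Fact p.Prime] (hodd : p ≠ 2) (A B C' A' B' C'' : ℤ_[p]) (k : ℕ)
    (hB : (p : ℤ_[p]) ^ k ∣ B) (hC : (p : ℤ_[p]) ^ k ∣ C')
    (hB' : (p : ℤ_[p]) ^ k ∣ B') (hC' : (p : ℤ_[p]) ^ k ∣ C'')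
    (hCk : ¬ (p : ℤ_[p]) ^ (k + 1) ∣ C') (hCk' : ¬ (p : ℤ_[p]) ^ (k + 1) ∣ C'')
    (hA : ¬ (p : ℤ_[p]) ∣ (A ^ 2 - C' ^ 2)) (hA' : ¬ (p : ℤ_[p]) ∣ (A' ^ 2 - C'' ^ 2))
    (hcong : ((X ^ 2 + C ((p : ℤ_[p]) * A)) ^ 2 -
          C ((p : ℤ_[p]) ^ 2) * (C B * X + C C') ^ 2).map
            (PadicInt.toZModPow (2 * k + 4)) =
        ((X ^ 2 + C ((p : ℤ_[p]) * A')) ^ 2 -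
          C ((p : ℤ_[p]) ^ 2) * (C B' * X + C C'') ^ 2).map
            (PadicInt.toZModPow (2 * k + 4))) :
    (p : ℤ_[p]) ^ (2 * k + 3) ∣ (A - A') := by
  set q : ℤ_[p] := (p : ℤ_[p]) with hqdef
  have hq : Prime q := PadicInt.prime_p
  have hq0 : q ≠ 0 := hq.ne_zero
  rw [aux_expand, aux_expand, aux_map, aux_map] at hcong
  have key : ∀ x y : ℤ_[p],
      (PadicInt.toZModPow (p := p) (2 * k + 4)) x = (PadicInt.toZModPow (2 * k + 4)) y →
      q ^ (2 * k + 4) ∣ (x - y) := by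
    intro x y hxy
    have : x - y ∈ RingHom.ker (PadicInt.toZModPow (p := p) (2 * k + 4)) := by
      rw [RingHom.mem_ker, map_sub, hxy, sub_self]
    rwa [PadicInt.ker_toZModPow, Ideal.mem_span_singleton] at this
  have h2 : q ^ (2 * k + 4) ∣
      (2 * (q * A) - q ^ 2 * B ^ 2) - (2 * (q * A') - q ^ 2 * B' ^ 2) := by
    apply key
    have := congrArg (fun P => P.coeff 2) hcong
    simpa only [aux_coeff2] using this
  have h1 : q ^ (2 * k + 4) ∣
      (-(q ^ 2 * (2 * B * C'))) - (-(q ^ 2 * (2 * B' * C''))) := by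
    apply key
    have := congrArg (fun P => P.coeff 1) hcong
    simpa only [aux_coeff1] using this
  have h0 : q ^ (2 * k + 4) ∣
      ((q * A) ^ 2 - q ^ 2 * C' ^ 2) - ((q * A') ^ 2 - q ^ 2 * C'' ^ 2) := by
    apply key
    have := congrArg (fun P => P.coeff 0) hcong
    simpa only [aux_coeff0] using this
  -- introduce witnesses
  obtain ⟨b, hb⟩ := hB
  obtain ⟨c, hc⟩ := hC
  obtain ⟨b', hb'⟩ := hB'
  obtain ⟨c', hc'⟩ := hC'
  obtain ⟨t, ht⟩ := h2
  obtain ⟨s, hs⟩ := h1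
  obtain ⟨r, hr⟩ := h0
  subst hb hc hb' hc'
  -- p does not divide c, c', 2
  have hpc : ¬ q ∣ c := fun ⟨d, hd⟩ => hCk ⟨d, by rw [hd]; ring⟩
  have hp2 : ¬ q ∣ (2 : ℤ_[p]) := by
    intro hd
    have hn : ‖((2:ℤ) : ℤ_[p])‖ < 1 := by
      rw [show ((2:ℤ) : ℤ_[p]) = (2 : ℤ_[p]) by push_cast; ring]
      exact (PadicInt.norm_lt_one_iff_dvd _).mpr hd
    have h2' : (p : ℤ) ∣ 2 := (PadicInt.norm_int_lt_one_iff_dvd 2).mp hn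
    have h2n : p ∣ 2 := by exact_mod_cast h2'
    have := Nat.le_of_dvd (by norm_num) h2n
    have := (Fact.out : p.Prime).two_le
    omega
  -- cancelled equations
  have E2 : 2 * (A - A') = q ^ (2 * k + 1) * (b ^ 2 - b' ^ 2) + q ^ (2 * k + 3) * t := by
    apply mul_left_cancel₀ hq0
    linear_combination ht
  have E1 : 2 * (b * c - b' * c') = q ^ 2 * (-s) := by
    apply mul_left_cancel₀ (pow_ne_zero (2 * k + 2) hq0)
    linear_combination -hs
  have E0 : (A ^ 2 - A' ^ 2) - q ^ (2 * k) * (c ^ 2 - c' ^ 2) = q ^ (2 * k + 2) * r := by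
    apply mul_left_cancel₀ (pow_ne_zero 2 hq0)
    linear_combination hr
  -- 2w = q u (A+A') + q^3 t (A+A') - 2 q^2 r
  have Ew : 2 * (c ^ 2 - c' ^ 2) =
      q * (b ^ 2 - b' ^ 2) * (A + A') + q ^ 3 * t * (A + A') - 2 * q ^ 2 * r := by
    apply mul_left_cancel₀ (pow_ne_zero (2 * k) hq0)
    linear_combination (A + A') * E2 - 2 * E0
  -- main divisibility: u * v = q^2 * W
  have Emain : (b ^ 2 - b' ^ 2) * (4 * c ^ 2 + 2 * q * b' ^ 2 * (A + A')) =
      q ^ 2 * (2 * (-s) * (b * c + b' * c') + 4 * b' ^ 2 * r - 2 * q * b' ^ 2 * t * (A + A')) := by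
    linear_combination (2 * (b * c + b' * c')) * E1 - 2 * b' ^ 2 * Ew
  have hv : ¬ q ∣ (4 * c ^ 2 + 2 * q * b' ^ 2 * (A + A')) := by
    intro hd
    have h4 : q ∣ 4 * c ^ 2 := by
      obtain ⟨d, hd2⟩ := hd
      exact ⟨d - 2 * b' ^ 2 * (A + A'), by linear_combination hd2⟩
    rcases hq.dvd_mul.mp h4 with h | h
    · have h22 : q ∣ (2 : ℤ_[p]) * 2 := by
        rw [show (2:ℤ_[p]) * 2 = 4 by norm_num]; exact h
      rcases hq.dvd_mul.mp h22 with h' | h' <;> exact hp2 h'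
    · exact hpc (hq.dvd_of_dvd_pow h)
  have hu : q ^ 2 ∣ (b ^ 2 - b' ^ 2) :=
    (hq.pow_dvd_of_dvd_mul_right 2 hv ⟨_, Emain⟩)
  obtain ⟨u1, hu1⟩ := hu
  have hfin : q ^ (2 * k + 3) ∣ 2 * (A - A') := ⟨u1 + t, by rw [E2, hu1]; ring⟩
  have := hq.pow_dvd_of_dvd_mul_left (2 * k + 3) hp2 (by rwa [mul_comm] at hfin)
  exact this
end
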